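/- arXiv:2310.02723 — 3 statements merged into one kernel-verified Lean document; each statement's English description precedes it below -/
import Mathlib

section
/- Let f(z) = ∑_{n≥1} a_n zⁿ be analytic on 𝔻 with f(0) = 0 and sup_{z∈𝔻} |f′(z)| ≤ 1. Then for every 0 ≤ r ≤ 0.872664 one has ∑_{n≥1} |a_n| rⁿ ≤ 1. (Hence the Bohr radius of the pair (differentiation, identity) is at least 0.872664, the root of ∑_{n≥1} r^{2n}/n² = 1 being 0.872664… .) -/
/-!
On each circle `|z| = ρ < 1` the Fourier coefficients of `f'` are `(n + 1) aₙ₊₁ ρⁿ`, so Bessel's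
inequality bounds their `ℓ²` norm by the `L²` norm of `f'` there, hence by `sup |f'| ≤ 1`; letting
`ρ → 1` gives `∑ (n + 1)² |aₙ₊₁|² ≤ 1`. Cauchy–Schwarz then yields
`∑ |aₙ| rⁿ ≤ (∑ n² |aₙ|²)^(1/2) (∑ r²ⁿ / n²)^(1/2)`, and the last sum is at most `1` for
`r ≤ 0.872664`.
-/

open Metric Filter Finset
open scoped Real ENNReal NNReal Topology

theorem Orthonormal.sum_norm_sq_le_of_hasSum {𝕜 E ι : Type*} [RCLike 𝕜] [NormedAddCommGroup E]
    [InnerProductSpace 𝕜 E] {v : ι → E} (hv : Orthonormal 𝕜 v) {a : ι → 𝕜} {x : E}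
    (hx : HasSum (fun i ↦ a i • v i) x) (s : Finset ι) :
    ∑ i ∈ s, ‖a i‖ ^ 2 ≤ ‖x‖ ^ 2 := by
  classical
  have hcoeff : ∀ i, inner 𝕜 (v i) x = a i := fun i ↦ by
    refine (hx.mapL (innerSL 𝕜 (v i))).unique ?_
    simp only [innerSL_apply_apply, inner_smul_right, orthonormal_iff_ite.1 hv, mul_ite,
      mul_one, mul_zero]
    convert hasSum_ite_eq i (a i) using 2 with j
    grind
  simpa only [hcoeff] using hv.sum_inner_products_le x (s := s)

open AddCircle MeasureTheory in
theorem HasFPowerSeriesOnBall.sum_sq_norm_coeff_mul_pow_le_of_lt {g : ℂ → ℂ}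
    {p : FormalMultilinearSeries ℂ ℂ ℂ} {R : ℝ≥0∞} (hg : HasFPowerSeriesOnBall g p 0 R) {M : ℝ}
    (hM : ∀ z ∈ eball (0 : ℂ) R, ‖g z‖ ≤ M) {ρ : ℝ≥0} (hρ : ρ < R) (s : Finset ℕ) :
    ∑ n ∈ s, (‖p.coeff n‖ * ρ ^ n) ^ 2 ≤ M ^ 2 := by
  have : Fact (0 < 2 * π) := ⟨Real.two_pi_pos⟩
  set a : ℕ → ℂ := fun n ↦ p.coeff n * (ρ : ℂ) ^ n
  have hsum : Summable fun n : ℕ ↦ a n • fourier (T := 2 * π) n := by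
    refine Summable.of_norm ?_
    simpa [a, norm_smul, fourier_norm, norm_mul, norm_pow] using
      p.summable_norm_mul_pow (hρ.trans_le hg.r_le)
  set G := ∑' n : ℕ, a n • fourier (T := 2 * π) n
  have hmem : ∀ t : AddCircle (2 * π), (ρ * toCircle t : ℂ) ∈ eball 0 R := fun t ↦ by
    have : ‖(toCircle t : ℂ)‖₊ = 1 := NNReal.eq (Circle.norm_coe _)
    simpa [enorm_eq_nnnorm, this] using hρ
  have hG : ∀ t, G t = g (ρ * toCircle t) := fun t ↦ by
    refine (hsum.hasSum.mapL (ContinuousMap.evalCLM ℂ t)).unique ?_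
    simpa [a, fourier_apply, toCircle_nsmul, mul_pow, mul_assoc, mul_comm, mul_left_comm] using
      hg.hasSum (hmem t)
  have hM0 : 0 ≤ M := (norm_nonneg _).trans (hM 0 (mem_eball_self hg.r_pos))
  have hGM : ‖G‖ ≤ M := (ContinuousMap.norm_le G hM0).2 fun t ↦ hG t ▸ hM _ (hmem t)
  have hL2 : ‖ContinuousMap.toLp 2 haarAddCircle ℂ G‖ ≤ M := by
    simpa [measureUnivNNReal] using ContinuousLinearMap.le_of_opNorm_le_of_le _
      (ContinuousMap.toLp_norm_le (p := 2) (haarAddCircle (T := 2 * π)) (𝕜 := ℂ) (E := ℂ)) hGM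
  have hBessel := (orthonormal_fourier.comp _ Nat.cast_injective).sum_norm_sq_le_of_hasSum
    (hsum.hasSum.mapL (ContinuousMap.toLp 2 haarAddCircle ℂ)) s
  calc ∑ n ∈ s, (‖p.coeff n‖ * ρ ^ n) ^ 2 = ∑ n ∈ s, ‖a n‖ ^ 2 := by simp [a]
    _ ≤ M ^ 2 := hBessel.trans (pow_le_pow_left₀ (norm_nonneg _) hL2 2)

theorem HasFPowerSeriesOnBall.sum_sq_norm_coeff_mul_pow_le {g : ℂ → ℂ}
    {p : FormalMultilinearSeries ℂ ℂ ℂ} {R : ℝ≥0} (hg : HasFPowerSeriesOnBall g p 0 R) {M : ℝ}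
    (hM : ∀ z ∈ eball (0 : ℂ) R, ‖g z‖ ≤ M) (s : Finset ℕ) :
    ∑ n ∈ s, (‖p.coeff n‖ * R ^ n) ^ 2 ≤ M ^ 2 := by
  have : (𝓝[<] R).NeBot := nhdsLT_neBot_of_exists_lt ⟨0, by exact_mod_cast hg.r_pos⟩
  have hcont : Continuous fun ρ : ℝ≥0 ↦ ∑ n ∈ s, (‖p.coeff n‖ * ρ ^ n) ^ 2 := by fun_prop
  refine le_of_tendsto ((hcont.tendsto R).mono_left (nhdsWithin_le_nhds (s := Set.Iio R))) ?_
  filter_upwards [self_mem_nhdsWithin] with ρ hρ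
  exact hg.sum_sq_norm_coeff_mul_pow_le_of_lt hM (ENNReal.coe_lt_coe.2 hρ) s

theorem HasFPowerSeriesOnBall.exists_hasFPowerSeriesOnBall_deriv {𝕜 F : Type*}
    [NontriviallyNormedField 𝕜] [NormedAddCommGroup F] [NormedSpace 𝕜 F] [CompleteSpace F]
    {f : 𝕜 → F} {p : FormalMultilinearSeries 𝕜 𝕜 F} {x : 𝕜} {r : ℝ≥0∞}
    (hf : HasFPowerSeriesOnBall f p x r) :
    ∃ q : FormalMultilinearSeries 𝕜 𝕜 F, HasFPowerSeriesOnBall (deriv f) q x r ∧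
      ∀ n, q.coeff n = (n + 1) • p.coeff (n + 1) :=
  ⟨(ContinuousLinearMap.apply 𝕜 F 1).compFormalMultilinearSeries p.derivSeries,
    by simpa [Function.comp_def] using
      (ContinuousLinearMap.apply 𝕜 F 1).comp_hasFPowerSeriesOnBall hf.fderiv,
    fun n ↦ p.derivSeries_coeff_one n⟩

theorem hasFPowerSeriesOnBall_ofScalars_of_hasSum {f : ℂ → ℂ} {c : ℕ → ℂ} {R : ℝ≥0}
    (hf : ∀ z ∈ ball (0 : ℂ) R, HasSum (fun n ↦ c n * z ^ n) (f z)) (hR : 0 < R) :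
    HasFPowerSeriesOnBall f (FormalMultilinearSeries.ofScalars ℂ c) 0 R where
  r_le := by
    refine ENNReal.le_of_forall_nnreal_lt fun ρ hρ ↦ ?_
    have hz : ((ρ : ℝ) : ℂ) ∈ ball (0 : ℂ) R := by simpa using hρ
    refine FormalMultilinearSeries.le_radius_of_tendsto _
      ((hf _ hz).summable.tendsto_atTop_zero.norm.congr fun n ↦ ?_)
    simp
  r_pos := by simpa using hR
  hasSum {y} hy := by
    simpa [FormalMultilinearSeries.ofScalars_apply_eq, mul_comm] using hf y (by simpa using hy)

theorem sum_range_sq_pow_div_le_one {r : ℝ} (hr0 : 0 ≤ r) (hr1 : r ≤ 0.872664) (N : ℕ) :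
    ∑ n ∈ range N, (r ^ (n + 1) / (n + 1)) ^ 2 ≤ 1 := by
  -- At `r = 0.872664` the series falls short of `1` by only about `10⁻⁶`: its first 35 terms are
  -- summed exactly and the rest is bounded by a geometric series.
  set c : ℝ := 0.872664 ^ 2
  have hc0 : 0 < c := by norm_num [c]
  have hc1 : c < 1 := by norm_num [c]
  have hrc : r ^ 2 ≤ c := pow_le_pow_left₀ hr0 hr1 2
  have hterm : ∀ n : ℕ, (r ^ (n + 1) / (n + 1)) ^ 2 ≤ c ^ (n + 1) / (n + 1) ^ 2 := fun n ↦ by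
    rw [div_pow, ← pow_mul, mul_comm, pow_mul]
    gcongr
  have htail : ∀ k : ℕ, c ^ (35 + k + 1) / ((35 + k : ℕ) + 1 : ℝ) ^ 2 ≤ c ^ 36 / 36 ^ 2 * c ^ k :=
    fun k ↦ by
      rw [show 35 + k + 1 = 36 + k by ring, pow_add, mul_div_right_comm]
      gcongr
      push_cast
      linarith [(k.cast_nonneg : (0 : ℝ) ≤ k)]
  calc ∑ n ∈ range N, (r ^ (n + 1) / (n + 1)) ^ 2
      ≤ ∑ n ∈ range (35 + N), c ^ (n + 1) / ((n : ℝ) + 1) ^ 2 :=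
        (sum_le_sum fun n _ ↦ hterm n).trans <|
          sum_le_sum_of_subset_of_nonneg (range_mono (by omega)) fun _ _ _ ↦ by positivity
    _ = ∑ n ∈ range 35, c ^ (n + 1) / ((n : ℝ) + 1) ^ 2 +
          ∑ k ∈ range N, c ^ (35 + k + 1) / ((35 + k : ℕ) + 1 : ℝ) ^ 2 := sum_range_add ..
    _ ≤ ∑ n ∈ range 35, c ^ (n + 1) / ((n : ℝ) + 1) ^ 2 + c ^ 36 / 36 ^ 2 * (1 - c)⁻¹ := by
        gcongr
        calc ∑ k ∈ range N, c ^ (35 + k + 1) / ((35 + k : ℕ) + 1 : ℝ) ^ 2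
            ≤ ∑ k ∈ range N, c ^ 36 / 36 ^ 2 * c ^ k := by gcongr with k; exact htail k
          _ ≤ c ^ 36 / 36 ^ 2 * (1 - c)⁻¹ := by
            rw [← mul_sum]
            gcongr
            simpa [← range_eq_Ico] using geom_sum_Ico_le_of_lt_one hc0.le hc1 (m := 0) (n := N)
    _ ≤ 1 := by norm_num [c, sum_range_succ]

theorem sum_range_mul_pow_succ_le_one {b : ℕ → ℝ} {N : ℕ}
    (hb : ∑ n ∈ range N, ((n + 1) * b n) ^ 2 ≤ 1) {r : ℝ} (hr0 : 0 ≤ r) (hr1 : r ≤ 0.872664) :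
    ∑ n ∈ range N, b n * r ^ (n + 1) ≤ 1 :=
  calc ∑ n ∈ range N, b n * r ^ (n + 1)
      = ∑ n ∈ range N, ((n + 1) * b n) * (r ^ (n + 1) / (n + 1)) :=
        sum_congr rfl fun n _ ↦ by field_simp
    _ ≤ √(∑ n ∈ range N, ((n + 1) * b n) ^ 2) * √(∑ n ∈ range N, (r ^ (n + 1) / (n + 1)) ^ 2) :=
        Real.sum_mul_le_sqrt_mul_sqrt ..
    _ ≤ 1 * 1 := by
        gcongr
        · exact Real.sqrt_le_one.2 hb
        · exact Real.sqrt_le_one.2 (sum_range_sq_pow_div_le_one hr0 hr1 N)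
    _ = 1 := one_mul 1

theorem bohr_radius_derivative_identity_lower_bound_general
    (f : ℂ → ℂ) (A : ℕ → ℂ)
    (hrep : ∀ z ∈ Metric.ball (0 : ℂ) 1, HasSum (fun n : ℕ => A n * z ^ n) (f z))
    (hA0 : A 0 = 0)
    (hderiv : ∀ z ∈ Metric.ball (0 : ℂ) 1, ‖deriv f z‖ ≤ 1)
    (r : ℝ) (hr0 : 0 ≤ r) (hr1 : r ≤ 0.872664) :
    Summable (fun n : ℕ => ‖A n‖ * r ^ n) ∧ ∑' n : ℕ, ‖A n‖ * r ^ n ≤ 1 := by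
  have hf := hasFPowerSeriesOnBall_ofScalars_of_hasSum (R := 1) (by simpa using hrep) one_pos
  obtain ⟨q, hq, hq_coeff⟩ := hf.exists_hasFPowerSeriesOnBall_deriv
  have hpartial : ∀ N, ∑ n ∈ range N, ‖A n‖ * r ^ n ≤ 1 := by
    rintro (_ | N)
    · simp
    rw [sum_range_succ', hA0, norm_zero, zero_mul, add_zero]
    refine sum_range_mul_pow_succ_le_one ?_ hr0 hr1
    have hcoeff := hq.sum_sq_norm_coeff_mul_pow_le (M := 1)
      (fun z hz ↦ hderiv z (by simpa [← ofReal_norm] using hz)) (range N)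
    simp only [hq_coeff, FormalMultilinearSeries.coeff_ofScalars, RCLike.norm_nsmul ℂ] at hcoeff
    simpa using hcoeff
  have hsum := summable_of_sum_range_le (fun n ↦ by positivity) hpartial
  exact ⟨hsum, hsum.tsum_le_of_sum_range_le hpartial⟩

theorem bohr_radius_derivative_identity_lower_bound
    (f : ℂ → ℂ) (A : ℕ → ℂ)
    (hrep : ∀ z ∈ Metric.ball (0 : ℂ) 1, HasSum (fun n : ℕ => A n * z ^ n) (f z))
    (hA0 : A 0 = 0) (hf0 : f 0 = 0)
    (hderiv : ∀ z ∈ Metric.ball (0 : ℂ) 1, ‖deriv f z‖ ≤ 1)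
    (r : ℝ) (hr0 : 0 ≤ r) (hr1 : r ≤ 0.872664) :
    Summable (fun n : ℕ => ‖A n‖ * r ^ n) ∧ ∑' n : ℕ, ‖A n‖ * r ^ n ≤ 1 :=
  bohr_radius_derivative_identity_lower_bound_general f A hrep hA0 hderiv r hr0 hr1
end

section
/- There exist a ∈ (0,1) and a function f analytic on 𝔻, namely f(z) = ∫₀^z (ζ − a)/(1 − aζ) dζ with Taylor coefficients a_1 = −a and a_n = (1 − a²) a^{n−2}/n for n ≥ 2, such that f(0) = 0, sup_{z∈𝔻} |f′(z)| ≤ 1, and ∑_{n≥1} |a_n| rⁿ = a r + ((1 − a²)/a²)(−log(1 − a r) − a r) > 1 for r = 0.883678. (Hence the Bohr radius of the pair (differentiation, identity) is at most 0.883678.) -/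
/-!
Integrating the geometric series of `f'(z) = (z - a)/(1 - az) = -a + (1 - a²) ∑ aⁿ⁻¹zⁿ` gives
`f(z) = -az + ((1 - a²)/a²)(-log(1 - az) - az)`; since `f'` is an automorphism of the disc,
`|f'| ≤ 1`. All coefficients from `a₂` on are positive, so the majorant series is the same
logarithmic expression with `-a` replaced by `a` in the linear term. For `a = 13/16` and
`r = 0.883678` it exceeds `1` by about `1.5 · 10⁻⁶`, which a partial sum of `∑ xⁿ/n` detects.
-/

open Metric Filter

/-- The Taylor coefficients of `f(z) = ∫₀ᶻ (ζ - a)/(1 - aζ) dζ`: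
`a₁ = -a` and `aₙ = (1 - a²)aⁿ⁻²/n` for `n ≥ 2`. -/
noncomputable def extremalCoeff (a : ℝ) : ℕ → ℂ := fun n =>
  if n = 0 then 0
  else if n = 1 then (-(a : ℂ))
  else ((1 - (a : ℂ) ^ 2) * (a : ℂ) ^ (n - 2) / (n : ℂ))

theorem hasSum_of_eq_mul_logSeries {K : Type*} [NormedField K] {c : ℕ → K} {c₁ κ w L : K}
    (h₀ : c 0 = 0) (h₁ : c 1 = c₁) (h : ∀ n, c (n + 2) = κ * (w ^ (n + 2) / (n + 2 : ℕ)))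
    (hL : HasSum (fun n : ℕ => w ^ n / n) L) :
    HasSum c (c₁ + κ * (L - w)) := by
  have hc : c = fun n : ℕ => κ * (w ^ n / n) + if n = 1 then c₁ - κ * w else 0 := by
    funext n
    match n with
    | 0 => simp [h₀]
    | 1 => simp [h₁]
    | n + 2 => simp [h]
  rw [hc, show c₁ + κ * (L - w) = κ * L + (c₁ - κ * w) by ring]
  exact (hL.mul_left κ).add (hasSum_ite_eq 1 _)

theorem Real.hasSum_pow_div_neg_log {x : ℝ} (hx : |x| < 1) :
    HasSum (fun n : ℕ => x ^ n / n) (-Real.log (1 - x)) := by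
  rw [← hasSum_nat_add_iff' 1]
  simpa using Real.hasSum_pow_div_log_of_abs_lt_one hx

theorem extremalCoeff_add_two (a : ℝ) (n : ℕ) :
    extremalCoeff a (n + 2) = (((1 - a ^ 2) * a ^ n / (n + 2 : ℕ) : ℝ) : ℂ) := by
  simp [extremalCoeff]

noncomputable def extremalFunction (a : ℝ) (z : ℂ) : ℂ :=
  -a * z + (1 - a ^ 2) / a ^ 2 * (-Complex.log (1 - a * z) - a * z)

theorem hasSum_extremalCoeff_mul_pow {a : ℝ} (ha : a ≠ 0) {z : ℂ} (hz : ‖(a : ℂ) * z‖ < 1) :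
    HasSum (fun n => extremalCoeff a n * z ^ n) (extremalFunction a z) := by
  refine hasSum_of_eq_mul_logSeries (by simp [extremalCoeff]) (by simp [extremalCoeff])
    (fun n => ?_) (Complex.hasSum_taylorSeries_neg_log hz)
  have ha' : (a : ℂ) ≠ 0 := by exact_mod_cast ha
  rw [extremalCoeff_add_two]
  push_cast
  field_simp
  ring

theorem hasSum_norm_extremalCoeff_mul_pow {a r : ℝ} (ha₀ : 0 < a) (ha₁ : a ≤ 1)
    (hr : |a * r| < 1) :
    HasSum (fun n => ‖extremalCoeff a n‖ * r ^ n)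
      (a * r + (1 - a ^ 2) / a ^ 2 * (-Real.log (1 - a * r) - a * r)) := by
  have h1a : 0 ≤ 1 - a ^ 2 := by nlinarith
  refine hasSum_of_eq_mul_logSeries (by simp [extremalCoeff])
    (by simp [extremalCoeff, ha₀.le]) (fun n => ?_) (Real.hasSum_pow_div_neg_log hr)
  rw [extremalCoeff_add_two, Complex.norm_real, Real.norm_of_nonneg (by positivity)]
  field_simp
  ring

theorem norm_sub_le_norm_one_sub_conj_mul {a z : ℂ} (ha : ‖a‖ ≤ 1) (hz : ‖z‖ ≤ 1) :
    ‖z - a‖ ≤ ‖1 - (starRingEnd ℂ) a * z‖ := by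
  have ha' : Complex.normSq a ≤ 1 := by rw [Complex.normSq_eq_norm_sq]; nlinarith [norm_nonneg a]
  have hz' : Complex.normSq z ≤ 1 := by rw [Complex.normSq_eq_norm_sq]; nlinarith [norm_nonneg z]
  rw [← sq_le_sq₀ (norm_nonneg _) (norm_nonneg _), ← Complex.normSq_eq_norm_sq,
    ← Complex.normSq_eq_norm_sq]
  simp only [Complex.normSq_apply] at *
  simp only [Complex.sub_re, Complex.sub_im, Complex.mul_re, Complex.mul_im, Complex.conj_re,
    Complex.conj_im, Complex.one_re, Complex.one_im]
  nlinarith [mul_nonneg (sub_nonneg.2 ha') (sub_nonneg.2 hz')]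

theorem hasDerivAt_extremalFunction {a : ℝ} (ha : a ≠ 0) {z : ℂ} (hz : ‖(a : ℂ) * z‖ < 1) :
    HasDerivAt (extremalFunction a) ((z - a) / (1 - a * z)) z := by
  have hslit : 1 - (a : ℂ) * z ∈ Complex.slitPlane := by
    simpa [sub_eq_add_neg] using
      Complex.mem_slitPlane_of_norm_lt_one (z := -(a * z)) (by rwa [norm_neg])
  have hne : 1 - (a : ℂ) * z ≠ 0 := Complex.slitPlane_ne_zero hslit
  have ha' : (a : ℂ) ≠ 0 := by exact_mod_cast ha
  have hlog := ((hasDerivAt_const_mul (a : ℂ)).const_sub 1).clog hslit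
  have hf : HasDerivAt (extremalFunction a)
      (-a + (1 - a ^ 2) / a ^ 2 * (-(-a / (1 - a * z)) - a)) z :=
    (hasDerivAt_const_mul _).add ((hlog.neg.sub (hasDerivAt_const_mul _)).const_mul _)
  convert hf using 1
  rw [eq_comm, ← sub_eq_zero]
  field_simp
  ring

theorem norm_ofReal_mul_lt_one {a : ℝ} (ha : |a| ≤ 1) {z : ℂ} (hz : ‖z‖ < 1) :
    ‖(a : ℂ) * z‖ < 1 := by
  rw [norm_mul, Complex.norm_real, Real.norm_eq_abs]
  nlinarith [abs_nonneg a, norm_nonneg z]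

theorem norm_deriv_extremalFunction_le_one {a : ℝ} (ha₀ : a ≠ 0) (ha₁ : |a| ≤ 1) {z : ℂ}
    (hz : ‖z‖ < 1) : ‖deriv (extremalFunction a) z‖ ≤ 1 := by
  rw [(hasDerivAt_extremalFunction ha₀ (norm_ofReal_mul_lt_one ha₁ hz)).deriv, norm_div]
  refine div_le_one_of_le₀ ?_ (norm_nonneg _)
  simpa using norm_sub_le_norm_one_sub_conj_mul (a := a) (by simpa using ha₁) hz.le

theorem one_lt_extremal_majorant :
    1 < 13 / 16 * 0.883678 + (1 - (13 / 16) ^ 2) / (13 / 16) ^ 2 *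
      (-Real.log (1 - 13 / 16 * 0.883678) - 13 / 16 * 0.883678 : ℝ) := by
  have hx : |(13 / 16 * 0.883678 : ℝ)| < 1 := by norm_num [abs_of_pos]
  have hlog : ∑ n ∈ Finset.range 35, (13 / 16 * 0.883678 : ℝ) ^ n / n
      ≤ -Real.log (1 - 13 / 16 * 0.883678) :=
    sum_le_hasSum _ (fun n _ => by positivity) (Real.hasSum_pow_div_neg_log hx)
  calc (1 : ℝ) < 13 / 16 * 0.883678 + (1 - (13 / 16) ^ 2) / (13 / 16) ^ 2 *
        (∑ n ∈ Finset.range 35, (13 / 16 * 0.883678 : ℝ) ^ n / n - 13 / 16 * 0.883678) := by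
        norm_num [Finset.sum_range_succ]
    _ ≤ _ := by gcongr

theorem bohr_radius_derivative_identity_upper_bound :
    ∃ a : ℝ, 0 < a ∧ a < 1 ∧ ∃ f : ℂ → ℂ,
      (∀ z ∈ Metric.ball (0 : ℂ) 1,
        HasSum (fun n : ℕ => extremalCoeff a n * z ^ n) (f z)) ∧
      f 0 = 0 ∧
      (∀ z ∈ Metric.ball (0 : ℂ) 1, ‖deriv f z‖ ≤ 1) ∧
      (∑' n : ℕ, ‖extremalCoeff a n‖ * (0.883678 : ℝ) ^ n
        = a * 0.883678
          + ((1 - a ^ 2) / a ^ 2) * (-Real.log (1 - a * 0.883678) - a * 0.883678)) ∧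
      1 < ∑' n : ℕ, ‖extremalCoeff a n‖ * (0.883678 : ℝ) ^ n := by
  have ha : |(13 / 16 : ℝ)| ≤ 1 := by norm_num [abs_of_pos]
  have hmajorant := hasSum_norm_extremalCoeff_mul_pow (a := 13 / 16) (r := 0.883678)
    (by norm_num) (by norm_num) (by norm_num [abs_of_pos])
  refine ⟨13 / 16, by norm_num, by norm_num, extremalFunction (13 / 16), fun z hz => ?_,
    by simp [extremalFunction], fun z hz => ?_, hmajorant.tsum_eq, ?_⟩
  · rw [mem_ball_zero_iff] at hz
    exact hasSum_extremalCoeff_mul_pow (by norm_num) (norm_ofReal_mul_lt_one ha hz)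
  · rw [mem_ball_zero_iff] at hz
    exact norm_deriv_extremalFunction_le_one (by norm_num) ha hz
  · rw [hmajorant.tsum_eq]
    exact one_lt_extremal_majorant
end

section
/- Let a ∈ ℝ with 0.892644 ≤ a < 1. Then there exists a unique r* ∈ (0, a) such that a r* + (1/a − a)·(−log(1 − a r*)/a − r*) = 1, and: (i) for every g(z) = ∑_{n≥0} b_n zⁿ analytic on 𝔻 with ‖g‖_∞ ≤ 1 and |b_0| = a, and every 0 ≤ r ≤ r*, one has ∑_{n≥0} |b_n| r^{n+1}/(n+1) ≤ 1; (ii) for every r with r* < r < 1 there exists such a function g for which ∑_{n≥0} |b_n| r^{n+1}/(n+1) > 1. (Equivalently, via f′ = g, the Bohr radius R_{∂→id₁}(a) of the pair (differentiation, identity) with initial coefficient a equals r* = (1/a)(1 + ((a²−1)/(2a²−1)) W(((1−2a²)/(a²−1)) e^{−1})) in terms of the Lambert W function.) -/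
/-!
By Schwarz–Pick, for `|ζ| = 1` the value `g (ρ ζ)` lies in a disk with centre `k(ρ) b₀` and
radius `ρ (1 - a²) / (1 - a² ρ²)`. Bessel's inequality for `g (ρ ·) - k(ρ) b₀` on the unit circle
then bounds `∑_{n ≥ 1} |bₙ|² ρ²ⁿ`, and Cauchy–Schwarz with `ρ² = t / a` turns this into
`∑_{n ≥ 1} |bₙ| tⁿ ≤ (1 - a²) t / (1 - a t)` for `t < a`. Integrating over `[0, r]` bounds the
majorant series by `bohrMajorant a r`, which the Möbius map `(a - z) / (1 - a z)` attains.
Finally `bohrMajorant a` increases on `[0, 1]`, vanishes at `0`, and exceeds `1` at `a` because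
`(1 - a²) e^{2a²} < 1` for `a ≥ 0.892644`, so `r*` is its unique root of `= 1` in `(0, a)`.
-/

open Metric Filter Finset Set MeasureTheory AddCircle ComplexConjugate

section PowerSeries

variable {B : ℕ → ℂ} {g : ℂ → ℂ}

theorem one_le_radius_ofScalars_of_hasSum
    (hg : ∀ z ∈ ball (0 : ℂ) 1, HasSum (fun n => B n * z ^ n) (g z)) :
    1 ≤ (FormalMultilinearSeries.ofScalars ℂ B).radius := by
  refine ENNReal.le_of_forall_nnreal_lt fun r hr => ?_
  have hr1 : (r : ℝ) < 1 := by exact_mod_cast ENNReal.coe_lt_one_iff.mp hr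
  have hz : ((r : ℝ) : ℂ) ∈ ball (0 : ℂ) 1 := by simpa using hr1
  refine (FormalMultilinearSeries.ofScalars ℂ B).le_radius_of_tendsto (l := 0) ?_
  simpa [FormalMultilinearSeries.ofScalars_norm] using (hg _ hz).summable.tendsto_atTop_zero.norm

theorem summable_norm_mul_pow_of_hasSum
    (hg : ∀ z ∈ ball (0 : ℂ) 1, HasSum (fun n => B n * z ^ n) (g z))
    {ρ : ℝ} (hρ0 : 0 ≤ ρ) (hρ1 : ρ < 1) : Summable fun n => ‖B n‖ * ρ ^ n := by
  lift ρ to NNReal using hρ0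
  simpa [FormalMultilinearSeries.ofScalars_norm] using
    (FormalMultilinearSeries.ofScalars ℂ B).summable_norm_mul_pow
      ((ENNReal.coe_lt_one_iff.mpr (by exact_mod_cast hρ1)).trans_le
        (one_le_radius_ofScalars_of_hasSum hg))

theorem differentiableOn_of_hasSum
    (hg : ∀ z ∈ ball (0 : ℂ) 1, HasSum (fun n => B n * z ^ n) (g z)) :
    DifferentiableOn ℂ g (ball 0 1) := by
  set p := FormalMultilinearSeries.ofScalars ℂ B
  have hp := one_le_radius_ofScalars_of_hasSum hg
  have hsum : HasFPowerSeriesOnBall p.sum p 0 p.radius :=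
    p.hasFPowerSeriesOnBall (zero_lt_one.trans_le hp)
  refine (hsum.differentiableOn.mono fun z hz => ?_).congr fun z hz => ?_
  · have : edist z 0 < 1 := by
      rw [edist_dist, ENNReal.ofReal_lt_one]
      exact mem_ball.mp hz
    exact Metric.mem_eball.mpr (this.trans_le hp)
  · rw [← FormalMultilinearSeries.ofScalarsSum, FormalMultilinearSeries.ofScalars_sum_eq,
      (hg z hz).tsum_eq.symm]
    simp [smul_eq_mul]

end PowerSeries

theorem Complex.norm_sub_le_norm_one_sub_conj_mul {w z : ℂ} (hw : ‖w‖ ≤ 1) (hz : ‖z‖ ≤ 1) :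
    ‖z - w‖ ≤ ‖1 - conj w * z‖ := by
  have key : Complex.normSq (1 - conj w * z) - Complex.normSq (z - w)
      = (1 - Complex.normSq w) * (1 - Complex.normSq z) := by
    simp only [Complex.normSq_apply, Complex.sub_re, Complex.sub_im, Complex.mul_re,
      Complex.mul_im, Complex.one_re, Complex.one_im, Complex.conj_re, Complex.conj_im]
    ring
  rw [Complex.normSq_eq_norm_sq, Complex.normSq_eq_norm_sq, Complex.normSq_eq_norm_sq,
    Complex.normSq_eq_norm_sq] at key
  refine pow_le_pow_iff_left₀ (norm_nonneg _) (norm_nonneg _) two_ne_zero |>.mp ?_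
  have hw2 : ‖w‖ ^ 2 ≤ 1 := pow_le_one₀ (norm_nonneg _) hw
  have hz2 : ‖z‖ ^ 2 ≤ 1 := pow_le_one₀ (norm_nonneg _) hz
  nlinarith [mul_nonneg (sub_nonneg.2 hw2) (sub_nonneg.2 hz2)]

theorem Complex.norm_sub_le_norm_mul_norm_one_sub_conj_mul {f : ℂ → ℂ}
    (hf : DifferentiableOn ℂ f (ball 0 1)) (hf1 : MapsTo f (ball 0 1) (closedBall 0 1))
    (h0 : ‖f 0‖ < 1) {z : ℂ} (hz : z ∈ ball 0 1) :
    ‖f z - f 0‖ ≤ ‖z‖ * ‖1 - conj (f 0) * f z‖ := by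
  have hD : ∀ ζ ∈ ball (0 : ℂ) 1, 1 - conj (f 0) * f ζ ≠ 0 := fun ζ hζ => by
    refine sub_ne_zero.2 fun h => ?_
    have : ‖conj (f 0) * f ζ‖ < 1 := by
      rw [norm_mul, Complex.norm_conj]
      exact (mul_le_of_le_one_right (norm_nonneg _)
        (mem_closedBall_zero_iff.1 (hf1 hζ))).trans_lt h0
    rw [← h, norm_one] at this
    exact this.false
  set φ : ℂ → ℂ := fun ζ => (f ζ - f 0) / (1 - conj (f 0) * f ζ)
  have hφ : DifferentiableOn ℂ φ (ball 0 1) :=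
    (hf.sub_const _).div ((differentiableOn_const _).sub ((differentiableOn_const _).mul hf)) hD
  have hφ1 : MapsTo φ (ball 0 1) (closedBall 0 1) := fun ζ hζ => by
    rw [mem_closedBall_zero_iff, norm_div, div_le_one (norm_pos_iff.2 (hD ζ hζ))]
    exact norm_sub_le_norm_one_sub_conj_mul h0.le (mem_closedBall_zero_iff.1 (hf1 hζ))
  have hφz : ‖φ z‖ ≤ ‖z‖ :=
    Complex.norm_le_norm_of_mapsTo_ball hφ hφ1 (by simp [φ]) (mem_ball_zero_iff.1 hz)
  calc ‖f z - f 0‖ = ‖φ z‖ * ‖1 - conj (f 0) * f z‖ := by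
        rw [← norm_mul, div_mul_cancel₀ _ (hD z hz)]
    _ ≤ ‖z‖ * ‖1 - conj (f 0) * f z‖ := by gcongr

/-- The disk `‖v - w‖ ≤ ρ ‖1 - w̄ v‖`, the image of `‖ζ‖ ≤ ρ` under `ζ ↦ (ζ + w) / (1 + w̄ ζ)`,
has centre `(1 - ρ²) / (1 - ‖w‖² ρ²) • w` and radius `ρ (1 - ‖w‖²) / (1 - ‖w‖² ρ²)`. -/
theorem Complex.norm_sub_mul_le_of_norm_sub_le {v w : ℂ} {ρ : ℝ} (hw : ‖w‖ < 1) (hρ : 0 ≤ ρ)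
    (hρ1 : ρ ≤ 1) (h : ‖v - w‖ ≤ ρ * ‖1 - conj w * v‖) :
    ‖v - ((1 - ρ ^ 2) / (1 - ‖w‖ ^ 2 * ρ ^ 2) : ℝ) * w‖
      ≤ ρ * (1 - ‖w‖ ^ 2) / (1 - ‖w‖ ^ 2 * ρ ^ 2) := by
  have hw2 : ‖w‖ ^ 2 < 1 := pow_lt_one₀ (norm_nonneg w) hw two_ne_zero
  have hden : 0 < 1 - ‖w‖ ^ 2 * ρ ^ 2 := by
    nlinarith [mul_le_of_le_one_right (sq_nonneg ‖w‖) (pow_le_one₀ hρ hρ1 (n := 2))]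
  set d := 1 - ‖w‖ ^ 2 * ρ ^ 2 with hd
  set u := v - w
  set D := 1 - conj w * v
  have hconj : conj w * w = (‖w‖ : ℂ) ^ 2 := by
    rw [mul_comm, Complex.mul_conj, Complex.normSq_eq_norm_sq]
    push_cast; rfl
  have hnum : (d : ℂ) * (v - ((1 - ρ ^ 2) / d : ℝ) * w) = u + ((ρ ^ 2 : ℝ) : ℂ) * w * D := by
    rw [mul_sub, ← mul_assoc, ← Complex.ofReal_mul, mul_div_cancel₀ _ hden.ne', hd]
    push_cast
    linear_combination (ρ : ℂ) ^ 2 * v * hconj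
  have hD : D + conj w * u = ((1 - ‖w‖ ^ 2 : ℝ) : ℂ) := by
    push_cast
    linear_combination -hconj
  have key : ‖u + ((ρ ^ 2 : ℝ) : ℂ) * w * D‖ ≤ ρ * ‖D + conj w * u‖ := by
    have hsq : ∀ x : ℂ, ‖x‖ ^ 2 = x.re * x.re + x.im * x.im := fun x => by
      rw [← Complex.normSq_eq_norm_sq, Complex.normSq_apply]
    have hid : (ρ * ‖D + conj w * u‖) ^ 2 - ‖u + ((ρ ^ 2 : ℝ) : ℂ) * w * D‖ ^ 2
        = ((ρ * ‖D‖) ^ 2 - ‖u‖ ^ 2) * d := by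
      simp only [hd, mul_pow, hsq]
      simp only [Complex.add_re, Complex.add_im, Complex.mul_re, Complex.mul_im,
        Complex.conj_re, Complex.conj_im, Complex.ofReal_re, Complex.ofReal_im]
      ring
    have hu : ‖u‖ ^ 2 ≤ (ρ * ‖D‖) ^ 2 := pow_le_pow_left₀ (norm_nonneg _) h 2
    refine (pow_le_pow_iff_left₀ (norm_nonneg _) (by positivity) two_ne_zero).mp ?_
    nlinarith [mul_nonneg (sub_nonneg.2 hu) hden.le]
  have hnorm :
      ‖(d : ℂ) * (v - ((1 - ρ ^ 2) / d : ℝ) * w)‖ = d * ‖v - ((1 - ρ ^ 2) / d : ℝ) * w‖ := by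
    rw [norm_mul, Complex.norm_real, Real.norm_of_nonneg hden.le]
  rw [le_div_iff₀ hden, mul_comm, ← hnorm, hnum]
  refine key.trans_eq ?_
  rw [hD, Complex.norm_real, Real.norm_of_nonneg (by linarith)]

theorem fourierCoeff_tsum_mul_fourier {T : ℝ} [Fact (0 < T)] {c : ℕ → ℂ} (hc : Summable (‖c ·‖))
    (n : ℕ) : fourierCoeff (fun x : AddCircle T => ∑' m : ℕ, c m * fourier m x) n = c n := by
  have hnorm : ∀ m x, ‖fourier (T := T) (-n) x * (c m * fourier m x)‖ = ‖c m‖ := fun m x => by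
    simp [fourier_apply, Circle.norm_coe]
  have hterm : ∀ m : ℕ, ∫ x, fourier (T := T) (-n) x * (c m * fourier m x) ∂haarAddCircle
      = c m * fourierCoeff (fourier (T := T) m) n := fun m => by
    simp only [fourierCoeff, smul_eq_mul, mul_left_comm _ (c m), integral_const_mul]
  simp only [fourierCoeff, smul_eq_mul, ← tsum_mul_left]
  rw [← integral_tsum_of_summable_integral_norm (fun m => (by fun_prop : Continuous _)
      |>.integrable_of_hasCompactSupport (HasCompactSupport.of_compactSpace _))
    (by simpa only [hnorm, integral_const, probReal_univ, one_smul] using hc)]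
  simp only [hterm, fourierCoeff_fourier, Pi.single_apply, Nat.cast_inj]
  simp

theorem sum_range_norm_sq_le_of_norm_tsum_le {c : ℕ → ℂ} (hc : Summable (‖c ·‖)) {M : ℝ}
    (hM : ∀ z : ℂ, ‖z‖ = 1 → ‖∑' n, c n * z ^ n‖ ≤ M) (N : ℕ) :
    ∑ n ∈ range N, ‖c n‖ ^ 2 ≤ M ^ 2 := by
  have : Fact ((0 : ℝ) < 1) := ⟨one_pos⟩
  set F : AddCircle (1 : ℝ) → ℂ := fun x => ∑' n : ℕ, c n * fourier n x
  have hFc : Continuous F := continuous_tsum (fun n => by fun_prop) hc fun n x => by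
    simp [fourier_apply, Circle.norm_coe]
  have hFM : ∀ x, ‖F x‖ ^ 2 ≤ M ^ 2 := fun x => by
    refine pow_le_pow_left₀ (norm_nonneg _) ?_ 2
    simpa [F, fourier_apply, toCircle_nsmul] using hM _ (Circle.norm_coe (toCircle x))
  have hmem : MemLp F 2 haarAddCircle := ContinuousMap.memLp haarAddCircle ℂ ⟨F, hFc⟩
  have hparseval := hasSum_sq_fourierCoeff (hmem.toLp F)
  rw [fourierCoeff_congr_ae hmem.coeFn_toLp] at hparseval
  have hae : (fun x => ‖hmem.toLp F x‖ ^ 2) =ᵐ[haarAddCircle] fun x => ‖F x‖ ^ 2 := by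
    filter_upwards [hmem.coeFn_toLp] with x hx
    rw [hx]
  calc ∑ n ∈ range N, ‖c n‖ ^ 2
      = ∑ k ∈ (range N).map ⟨_, Nat.cast_injective⟩, ‖fourierCoeff F k‖ ^ 2 := by
        rw [sum_map]
        exact sum_congr rfl fun n _ => by rw [← fourierCoeff_tsum_mul_fourier (T := 1) hc n]; rfl
    _ ≤ ∫ x, ‖hmem.toLp F x‖ ^ 2 ∂haarAddCircle :=
        sum_le_hasSum _ (fun _ _ => by positivity) hparseval
    _ ≤ M ^ 2 := by
        rw [integral_congr_ae hae]
        refine (integral_mono_of_nonneg (.of_forall fun _ => by positivity)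
          (integrable_const (M ^ 2)) (.of_forall hFM)).trans (by simp)

/-- The majorant series of `∫₀^z (a - ζ) / (1 - a ζ) dζ` at radius `r`
(`hasSum_norm_mobiusCoeff_majorant`). -/
noncomputable def bohrMajorant (a r : ℝ) : ℝ :=
  a * r + (1 / a - a) * (-Real.log (1 - a * r) / a - r)

theorem bohrMajorant_zero (a : ℝ) : bohrMajorant a 0 = 0 := by
  simp [bohrMajorant]

theorem hasDerivAt_bohrMajorant {a r : ℝ} (ha : a ≠ 0) (hr : a * r < 1) :
    HasDerivAt (bohrMajorant a) (a + (1 - a ^ 2) * r / (1 - a * r)) r := by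
  have hr' : 1 - a * r ≠ 0 := sub_ne_zero.2 hr.ne'
  have hlog : HasDerivAt (fun s => Real.log (1 - a * s)) (-a / (1 - a * r)) r := by
    simpa using (((hasDerivAt_id r).const_mul a).const_sub 1).log hr'
  refine (((hasDerivAt_id r).const_mul a).add
    (((hlog.neg.div_const a).sub (hasDerivAt_id r)).const_mul (1 / a - a))).congr_deriv ?_
  field_simp
  ring

theorem strictMonoOn_bohrMajorant {a : ℝ} (ha0 : 0 < a) (ha1 : a < 1) :
    StrictMonoOn (bohrMajorant a) (Icc 0 1) := by
  have hderiv : ∀ t ∈ Icc (0 : ℝ) 1, HasDerivAt (bohrMajorant a)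
      (a + (1 - a ^ 2) * t / (1 - a * t)) t := fun t ht =>
    hasDerivAt_bohrMajorant ha0.ne' (by nlinarith [ht.2])
  refine strictMonoOn_of_deriv_pos (convex_Icc 0 1)
    (fun t ht => (hderiv t ht).continuousAt.continuousWithinAt) fun t ht => ?_
  rw [interior_Icc] at ht
  rw [(hderiv t (Ioo_subset_Icc_self ht)).deriv]
  have h1 : 0 < 1 - a * t := by nlinarith [ht.2]
  have h2 : 0 ≤ 1 - a ^ 2 := by nlinarith
  exact add_pos_of_pos_of_nonneg ha0 (div_nonneg (mul_nonneg h2 ht.1.le) h1.le)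

theorem one_sub_mul_exp_two_mul_lt_one {t : ℝ} (ht0 : 0.892644 ^ 2 ≤ t) (ht1 : t < 1) :
    (1 - t) * Real.exp (2 * t) < 1 := by
  set t₀ : ℝ := 0.892644 ^ 2
  have hbase : (1 - t₀) * Real.exp (2 * t₀) < 1 := by
    have hx : |t₀ / 2| ≤ 1 := by norm_num [t₀, abs_of_nonneg]
    have hexp : Real.exp (t₀ / 2) ≤ 1.48944961 := by
      have h := (abs_le.1 (Real.exp_bound hx (n := 8) (by norm_num))).2
      have hsum : ∑ m ∈ range 8, (t₀ / 2) ^ m / m.factorial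
          + |t₀ / 2| ^ 8 * ((Nat.succ 8 : ℕ) / ((Nat.factorial 8 : ℕ) * (8 : ℕ)))
          ≤ 1.48944961 := by
        simp only [Finset.sum_range_succ, Finset.sum_range_zero]
        norm_num [Nat.factorial, t₀, abs_of_nonneg]
      linarith
    have h4 : Real.exp (2 * t₀) = Real.exp (t₀ / 2) ^ 4 := by
      rw [← Real.exp_nat_mul]; ring_nf
    rw [h4]
    nlinarith [pow_le_pow_left₀ (Real.exp_pos _).le hexp 4]
  -- `t ↦ (1 - t) e^{2t}` decreases for `t ≥ 1/2`, via `e^{2δ} ≤ 1 / (1 - 2δ)`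
  have ht₀ : 1 / 2 < t₀ := by norm_num [t₀]
  clear_value t₀
  have hexp : Real.exp (2 * (t - t₀)) ≤ 1 / (1 - 2 * (t - t₀)) :=
    Real.exp_bound_div_one_sub_of_interval (by linarith) (by linarith)
  have hmono : (1 - t) * Real.exp (2 * (t - t₀)) ≤ 1 - t₀ := by
    refine (mul_le_mul_of_nonneg_left hexp (by linarith)).trans ?_
    rw [mul_one_div, div_le_iff₀ (by linarith)]
    nlinarith
  calc (1 - t) * Real.exp (2 * t) = (1 - t) * Real.exp (2 * (t - t₀)) * Real.exp (2 * t₀) := by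
        rw [mul_assoc, ← Real.exp_add]
        ring_nf
    _ ≤ (1 - t₀) * Real.exp (2 * t₀) := by gcongr
    _ < 1 := hbase

theorem one_lt_bohrMajorant_self {a : ℝ} (ha0 : 0.892644 ≤ a) (ha1 : a < 1) :
    1 < bohrMajorant a a := by
  have ha : 0 < a := by linarith
  have hpos : 0 < 1 - a ^ 2 := by nlinarith
  have hlog : 2 * a ^ 2 < -Real.log (1 - a ^ 2) := by
    have h := one_sub_mul_exp_two_mul_lt_one (t := a ^ 2) (by nlinarith) (by nlinarith)
    rw [lt_neg, Real.log_lt_iff_lt_exp hpos, Real.exp_neg, inv_eq_one_div,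
      lt_div_iff₀ (Real.exp_pos _)]
    exact h
  have hident : bohrMajorant a a = 2 * a ^ 2 - 1 + (1 - a ^ 2) * -Real.log (1 - a ^ 2) / a ^ 2 := by
    unfold bohrMajorant; field_simp; ring
  have : 2 * (1 - a ^ 2) < (1 - a ^ 2) * -Real.log (1 - a ^ 2) / a ^ 2 := by
    rw [lt_div_iff₀ (by positivity)]
    nlinarith
  linarith

theorem exists_mem_Ioo_bohrMajorant_eq_one {a : ℝ} (ha0 : 0.892644 ≤ a) (ha1 : a < 1) :
    ∃ rs ∈ Ioo 0 a, bohrMajorant a rs = 1 := by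
  have ha : 0 < a := by linarith
  have hcont : ContinuousOn (bohrMajorant a) (Icc 0 a) := fun t ht =>
    (hasDerivAt_bohrMajorant ha.ne' (by nlinarith [ht.2])).continuousAt.continuousWithinAt
  exact intermediate_value_Ioo ha.le hcont
    ⟨(bohrMajorant_zero a).symm ▸ one_pos, one_lt_bohrMajorant_self ha0 ha1⟩

section BoundedPowerSeries

variable {B : ℕ → ℂ} {g : ℂ → ℂ} {a : ℝ}

theorem norm_sub_mul_coeff_zero_le
    (hg : ∀ z ∈ ball (0 : ℂ) 1, HasSum (fun n => B n * z ^ n) (g z))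
    (hg1 : ∀ z ∈ ball (0 : ℂ) 1, ‖g z‖ ≤ 1) (hB0 : ‖B 0‖ = a) (ha1 : a < 1)
    {z : ℂ} (hz : z ∈ ball (0 : ℂ) 1) :
    ‖g z - ((1 - ‖z‖ ^ 2) / (1 - a ^ 2 * ‖z‖ ^ 2) : ℝ) * B 0‖
      ≤ ‖z‖ * (1 - a ^ 2) / (1 - a ^ 2 * ‖z‖ ^ 2) := by
  have hg0 : g 0 = B 0 := by
    simpa using (hg 0 (mem_ball_self one_pos)).unique (hasSum_single 0 fun n hn => by simp [hn])
  have hB0' : ‖B 0‖ < 1 := hB0 ▸ ha1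
  have hpick := Complex.norm_sub_le_norm_mul_norm_one_sub_conj_mul
    (differentiableOn_of_hasSum hg) (fun ζ hζ => mem_closedBall_zero_iff.2 (hg1 ζ hζ))
    (hg0 ▸ hB0') hz
  rw [hg0] at hpick
  simpa only [hB0] using Complex.norm_sub_mul_le_of_norm_sub_le hB0' (norm_nonneg z)
    (mem_ball_zero_iff.1 hz).le hpick

theorem sum_range_norm_sq_mul_pow_le
    (hg : ∀ z ∈ ball (0 : ℂ) 1, HasSum (fun n => B n * z ^ n) (g z))
    (hg1 : ∀ z ∈ ball (0 : ℂ) 1, ‖g z‖ ≤ 1) (hB0 : ‖B 0‖ = a) (ha1 : a < 1)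
    {ρ : ℝ} (hρ0 : 0 ≤ ρ) (hρ1 : ρ < 1) (N : ℕ) :
    ∑ n ∈ range N, (‖B (n + 1)‖ * ρ ^ (n + 1)) ^ 2
      ≤ (1 - a ^ 2) ^ 2 * ρ ^ 2 / (1 - a ^ 2 * ρ ^ 2) := by
  have ha0 : 0 ≤ a := hB0 ▸ norm_nonneg _
  have haρ : a * ρ < 1 := mul_lt_one_of_nonneg_of_lt_one_left ha0 ha1 hρ1.le
  have hden : 0 < 1 - a ^ 2 * ρ ^ 2 := by nlinarith [mul_nonneg ha0 hρ0]
  -- Bessel's inequality is applied to `g (ρ ·) - k b₀`, centring the Schwarz–Pick disk at `0`.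
  set k : ℝ := (1 - ρ ^ 2) / (1 - a ^ 2 * ρ ^ 2)
  set c : ℕ → ℂ := fun n => B n * ρ ^ n - if n = 0 then k * B 0 else 0
  have hc_succ : ∀ n, c (n + 1) = B (n + 1) * ρ ^ (n + 1) := fun n => by simp [c]
  have hc : Summable (‖c ·‖) := by
    refine (summable_nat_add_iff 1).1 ?_
    simpa [hc_succ, Complex.norm_real, abs_of_nonneg hρ0] using
      (summable_nat_add_iff 1).2 (summable_norm_mul_pow_of_hasSum hg hρ0 hρ1)
  have hbound : ∀ z : ℂ, ‖z‖ = 1 →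
      ‖∑' n, c n * z ^ n‖ ≤ ρ * (1 - a ^ 2) / (1 - a ^ 2 * ρ ^ 2) := by
    intro z hz
    have hρz : ‖(ρ : ℂ) * z‖ = ρ := by simp [hz, abs_of_nonneg hρ0]
    have hmem : (ρ : ℂ) * z ∈ ball (0 : ℂ) 1 := by rwa [mem_ball_zero_iff, hρz]
    have hsum : HasSum (fun n => c n * z ^ n) (g (ρ * z) - k * B 0) := by
      refine ((hg _ hmem).sub (hasSum_ite_eq 0 ((k : ℂ) * B 0))).congr_fun fun n => ?_
      rcases n with _ | n <;> simp [c, mul_pow]; ring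
    rw [hsum.tsum_eq]
    have := norm_sub_mul_coeff_zero_le hg hg1 hB0 ha1 hmem
    rwa [hρz] at this
  have hbessel := sum_range_norm_sq_le_of_norm_tsum_le hc hbound (N + 1)
  rw [sum_range_succ'] at hbessel
  have hc0 : ‖c 0‖ = ρ ^ 2 * (1 - a ^ 2) / (1 - a ^ 2 * ρ ^ 2) * a := by
    have h1k : 1 - k = ρ ^ 2 * (1 - a ^ 2) / (1 - a ^ 2 * ρ ^ 2) := by
      rw [eq_div_iff hden.ne', sub_mul, div_mul_cancel₀ _ hden.ne']
      ring
    have : c 0 = ((1 - k : ℝ) : ℂ) * B 0 := by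
      simp only [c, pow_zero, mul_one]
      push_cast
      ring
    rw [this, norm_mul, Complex.norm_real, hB0, h1k,
      Real.norm_of_nonneg (div_nonneg (mul_nonneg (sq_nonneg ρ) (by nlinarith)) hden.le)]
  simp only [hc_succ, norm_mul, norm_pow, Complex.norm_real, Real.norm_of_nonneg hρ0, hc0]
    at hbessel
  have halg : (ρ * (1 - a ^ 2) / (1 - a ^ 2 * ρ ^ 2)) ^ 2
      - (ρ ^ 2 * (1 - a ^ 2) / (1 - a ^ 2 * ρ ^ 2) * a) ^ 2
      = (1 - a ^ 2) ^ 2 * ρ ^ 2 / (1 - a ^ 2 * ρ ^ 2) := by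
    field_simp
  linarith

theorem sum_range_norm_mul_pow_succ_le
    (hg : ∀ z ∈ ball (0 : ℂ) 1, HasSum (fun n => B n * z ^ n) (g z))
    (hg1 : ∀ z ∈ ball (0 : ℂ) 1, ‖g z‖ ≤ 1) (hB0 : ‖B 0‖ = a) (ha1 : a < 1)
    {t : ℝ} (ht0 : 0 ≤ t) (hta : t < a) (N : ℕ) :
    ∑ n ∈ range N, ‖B (n + 1)‖ * t ^ (n + 1) ≤ (1 - a ^ 2) * t / (1 - a * t) := by
  have ha : 0 < a := ht0.trans_lt hta
  have hat : a * t < 1 := by nlinarith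
  have hat0 : 0 ≤ a * t := by positivity
  set ρ := √(t / a)
  set s := √(a * t)
  have hρsq : ρ ^ 2 = t / a := Real.sq_sqrt (div_nonneg ht0 ha.le)
  have hρ1 : ρ < 1 := by
    nlinarith [Real.sqrt_nonneg (t / a), (div_lt_one ha).2 hta]
  have hρs : ρ * s = t := by
    rw [← Real.sqrt_mul (div_nonneg ht0 ha.le), show t / a * (a * t) = t ^ 2 by field_simp,
      Real.sqrt_sq ht0]
  have hgeom : ∑ n ∈ range N, (s ^ (n + 1)) ^ 2 ≤ a * t / (1 - a * t) := by
    have h := geom_sum_Ico_le_of_lt_one hat0 hat (m := 1) (n := N + 1)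
    rw [sum_Ico_eq_sum_range, Nat.add_sub_cancel, pow_one] at h
    refine le_of_eq_of_le (sum_congr rfl fun n _ => ?_) h
    rw [← pow_mul, mul_comm, pow_mul, Real.sq_sqrt hat0, add_comm]
  have hl2 := sum_range_norm_sq_mul_pow_le hg hg1 hB0 ha1 (Real.sqrt_nonneg _) hρ1 N
  calc ∑ n ∈ range N, ‖B (n + 1)‖ * t ^ (n + 1)
      = ∑ n ∈ range N, ‖B (n + 1)‖ * ρ ^ (n + 1) * s ^ (n + 1) := by
        simp only [mul_assoc, ← mul_pow, hρs]
    _ ≤ √(∑ n ∈ range N, (‖B (n + 1)‖ * ρ ^ (n + 1)) ^ 2) * √(∑ n ∈ range N, (s ^ (n + 1)) ^ 2) :=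
        Real.sum_mul_le_sqrt_mul_sqrt _ _ _
    _ ≤ √((1 - a ^ 2) ^ 2 * ρ ^ 2 / (1 - a ^ 2 * ρ ^ 2)) * √(a * t / (1 - a * t)) := by
        gcongr
    _ = (1 - a ^ 2) * t / (1 - a * t) := by
        have hden : 0 < 1 - a * t := by linarith
        have haρ : a ^ 2 * ρ ^ 2 = a * t := by rw [hρsq]; field_simp
        rw [haρ, ← Real.sqrt_mul (by positivity), hρsq,
          show (1 - a ^ 2) ^ 2 * (t / a) / (1 - a * t) * (a * t / (1 - a * t))
            = ((1 - a ^ 2) * t / (1 - a * t)) ^ 2 by field_simp,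
          Real.sqrt_sq (div_nonneg (mul_nonneg (by nlinarith) ht0) hden.le)]

theorem sum_range_norm_mul_pow_div_le_bohrMajorant
    (hg : ∀ z ∈ ball (0 : ℂ) 1, HasSum (fun n => B n * z ^ n) (g z))
    (hg1 : ∀ z ∈ ball (0 : ℂ) 1, ‖g z‖ ≤ 1) (hB0 : ‖B 0‖ = a)
    {r : ℝ} (hr0 : 0 ≤ r) (hra : r < a) (ha1 : a < 1) (N : ℕ) :
    ∑ n ∈ range N, ‖B n‖ * r ^ (n + 1) / (n + 1) ≤ bohrMajorant a r := by
  have ha : 0 < a := hr0.trans_lt hra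
  have hpartial : ∀ t ∈ Icc 0 r,
      ∑ n ∈ range N, ‖B n‖ * t ^ n ≤ a + (1 - a ^ 2) * t / (1 - a * t) := by
    intro t ht
    cases N with
    | zero =>
      have : 0 < 1 - a * t := by nlinarith [ht.2]
      have : 0 ≤ 1 - a ^ 2 := by nlinarith
      simp only [range_zero, sum_empty]
      exact add_nonneg ha.le (div_nonneg (mul_nonneg this ht.1) (by linarith))
    | succ N =>
      rw [sum_range_succ', pow_zero, mul_one, hB0, add_comm]
      exact add_le_add_right (sum_range_norm_mul_pow_succ_le hg hg1 hB0 ha1 ht.1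
        (ht.2.trans_lt hra) N) a
  have hderiv : ∀ t ∈ Icc 0 r, HasDerivAt
      (fun t => bohrMajorant a t - ∑ n ∈ range N, ‖B n‖ * t ^ (n + 1) / (n + 1))
      (a + (1 - a ^ 2) * t / (1 - a * t) - ∑ n ∈ range N, ‖B n‖ * t ^ n) t := by
    intro t ht
    refine (hasDerivAt_bohrMajorant ha.ne' (by nlinarith [ht.2])).sub
      ((HasDerivAt.fun_sum fun n _ =>
        ((hasDerivAt_pow (n + 1) t).const_mul _).div_const _).congr_deriv
          (sum_congr rfl fun n _ => ?_))
    field_simp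
    simp
  have hmono := monotoneOn_of_hasDerivWithinAt_nonneg (convex_Icc 0 r)
    (fun t ht => (hderiv t ht).continuousAt.continuousWithinAt)
    (fun t ht => (hderiv t (interior_subset ht)).hasDerivWithinAt)
    (fun t ht => sub_nonneg.2 (hpartial t (interior_subset ht)))
    (left_mem_Icc.2 hr0) (right_mem_Icc.2 hr0) hr0
  simpa [bohrMajorant_zero] using hmono

theorem summable_and_tsum_le_bohrMajorant
    (hg : ∀ z ∈ ball (0 : ℂ) 1, HasSum (fun n => B n * z ^ n) (g z))
    (hg1 : ∀ z ∈ ball (0 : ℂ) 1, ‖g z‖ ≤ 1) (hB0 : ‖B 0‖ = a)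
    {r : ℝ} (hr0 : 0 ≤ r) (hra : r < a) (ha1 : a < 1) :
    Summable (fun n : ℕ => ‖B n‖ * r ^ (n + 1) / ((n : ℝ) + 1)) ∧
      ∑' n : ℕ, ‖B n‖ * r ^ (n + 1) / ((n : ℝ) + 1) ≤ bohrMajorant a r := by
  have hN := sum_range_norm_mul_pow_div_le_bohrMajorant hg hg1 hB0 hr0 hra ha1
  have hnn : ∀ n : ℕ, 0 ≤ ‖B n‖ * r ^ (n + 1) / ((n : ℝ) + 1) := fun n => by positivity
  exact ⟨summable_of_sum_range_le hnn hN, Real.tsum_le_of_sum_range_le hnn hN⟩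

end BoundedPowerSeries

noncomputable def mobiusCoeff (a : ℝ) : ℕ → ℂ
  | 0 => a
  | n + 1 => -(1 - (a : ℂ) ^ 2) * (a : ℂ) ^ n

theorem hasSum_mobiusCoeff_mul_pow {a : ℝ} {z : ℂ} (haz : ‖(a : ℂ) * z‖ < 1) :
    HasSum (fun n => mobiusCoeff a n * z ^ n) ((a - z) / (1 - a * z)) := by
  have hden : 1 - (a : ℂ) * z ≠ 0 := fun h => by
    rw [← sub_eq_zero.1 h, norm_one] at haz
    exact haz.false
  have e : ∀ n, mobiusCoeff a (n + 1) * z ^ (n + 1) = -(1 - (a : ℂ) ^ 2) * z * (a * z) ^ n :=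
      fun n => by rw [mobiusCoeff]; ring
  have htail : HasSum (fun n => mobiusCoeff a (n + 1) * z ^ (n + 1))
      (-(1 - (a : ℂ) ^ 2) * z * (1 - a * z)⁻¹) := by
    simp only [e]
    exact (hasSum_geometric_of_norm_lt_one haz).mul_left (-(1 - (a : ℂ) ^ 2) * z)
  have hval : mobiusCoeff a 0 * z ^ 0 + -(1 - (a : ℂ) ^ 2) * z * (1 - a * z)⁻¹
      = (a - z) / (1 - a * z) := by
    rw [mobiusCoeff]
    field_simp
    ring
  have := HasSum.zero_add (f := fun n => mobiusCoeff a n * z ^ n) htail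
  rwa [hval] at this

theorem norm_mobius_le_one {a : ℝ} (ha : |a| ≤ 1) {z : ℂ} (hz : ‖z‖ ≤ 1) :
    ‖(a - z) / (1 - a * z)‖ ≤ 1 := by
  have h := Complex.norm_sub_le_norm_one_sub_conj_mul (w := a) (by simpa using ha) hz
  rw [Complex.conj_ofReal, norm_sub_rev] at h
  rw [norm_div]
  exact div_le_one_of_le₀ h (norm_nonneg _)

theorem norm_mobiusCoeff_succ {a : ℝ} (ha0 : 0 ≤ a) (ha1 : a ≤ 1) (n : ℕ) :
    ‖mobiusCoeff a (n + 1)‖ = (1 - a ^ 2) * a ^ n := by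
  have : (1 : ℂ) - (a : ℂ) ^ 2 = ((1 - a ^ 2 : ℝ) : ℂ) := by push_cast; ring
  rw [mobiusCoeff, norm_mul, norm_neg, this, norm_pow, Complex.norm_real, Complex.norm_real,
    Real.norm_of_nonneg (by nlinarith), Real.norm_of_nonneg ha0]

theorem hasSum_norm_mobiusCoeff_majorant {a r : ℝ} (ha0 : 0 < a) (ha1 : a < 1) (hr0 : 0 ≤ r)
    (hr1 : r < 1) :
    HasSum (fun n => ‖mobiusCoeff a n‖ * r ^ (n + 1) / (n + 1)) (bohrMajorant a r) := by
  have hlog := Real.hasSum_pow_div_log_of_abs_lt_one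
    (x := a * r) (by rw [abs_of_nonneg (by positivity)]; nlinarith)
  have htail : HasSum (fun n : ℕ => ‖mobiusCoeff a (n + 1)‖ * r ^ (n + 1 + 1) / ((n + 1 : ℕ) + 1))
      ((1 - a ^ 2) / a ^ 2 * (-Real.log (1 - a * r) - a * r)) := by
    have e : ∀ n : ℕ, ‖mobiusCoeff a (n + 1)‖ * r ^ (n + 1 + 1) / ((n + 1 : ℕ) + 1)
        = (1 - a ^ 2) / a ^ 2 * ((a * r) ^ (n + 1 + 1) / ((n + 1 : ℕ) + 1)) := fun n => by
      rw [norm_mobiusCoeff_succ ha0.le ha1.le]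
      field_simp
      ring
    simp only [e]
    refine HasSum.mul_left _ ?_
    simpa using (hasSum_nat_add_iff' 1).2 hlog
  have hval : ‖mobiusCoeff a 0‖ * r ^ (0 + 1) / ((0 : ℕ) + 1)
      + (1 - a ^ 2) / a ^ 2 * (-Real.log (1 - a * r) - a * r) = bohrMajorant a r := by
    rw [mobiusCoeff, Complex.norm_real, Real.norm_of_nonneg ha0.le, bohrMajorant]
    field_simp
    ring
  have := HasSum.zero_add (f := fun n : ℕ => ‖mobiusCoeff a n‖ * r ^ (n + 1) / (n + 1)) htail
  rwa [hval] at this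

theorem exists_hasSum_majorant_eq_bohrMajorant {a r : ℝ} (ha0 : 0 < a) (ha1 : a < 1)
    (hr0 : 0 ≤ r) (hr1 : r < 1) :
    ∃ (g : ℂ → ℂ) (B : ℕ → ℂ),
      (∀ z ∈ ball (0 : ℂ) 1, HasSum (fun n => B n * z ^ n) (g z)) ∧
      (∀ z ∈ ball (0 : ℂ) 1, ‖g z‖ ≤ 1) ∧ ‖B 0‖ = a ∧
      HasSum (fun n : ℕ => ‖B n‖ * r ^ (n + 1) / ((n : ℝ) + 1)) (bohrMajorant a r) := by
  have haz : ∀ z ∈ ball (0 : ℂ) 1, ‖(a : ℂ) * z‖ < 1 := fun z hz => by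
    rw [norm_mul, Complex.norm_real, Real.norm_of_nonneg ha0.le]
    exact mul_lt_one_of_nonneg_of_lt_one_left ha0.le ha1 (mem_ball_zero_iff.1 hz).le
  exact ⟨fun z => (a - z) / (1 - a * z), mobiusCoeff a,
    fun z hz => hasSum_mobiusCoeff_mul_pow (haz z hz),
    fun z hz => norm_mobius_le_one (abs_le.2 ⟨by linarith, ha1.le⟩) (mem_ball_zero_iff.1 hz).le,
    by simp [mobiusCoeff, ha0.le], hasSum_norm_mobiusCoeff_majorant ha0 ha1 hr0 hr1⟩

theorem bohr_radius_derivative_identity_initial_coefficient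
    (a : ℝ) (ha0 : 0.892644 ≤ a) (ha1 : a < 1) :
    ∃ rs : ℝ, rs ∈ Set.Ioo 0 a ∧
      (a * rs + (1 / a - a) * (-Real.log (1 - a * rs) / a - rs) = 1) ∧
      (∀ r' ∈ Set.Ioo (0 : ℝ) a,
        a * r' + (1 / a - a) * (-Real.log (1 - a * r') / a - r') = 1 → r' = rs) ∧
      (∀ (g : ℂ → ℂ) (B : ℕ → ℂ),
        (∀ z ∈ Metric.ball (0 : ℂ) 1, HasSum (fun n : ℕ => B n * z ^ n) (g z)) →
        (∀ z ∈ Metric.ball (0 : ℂ) 1, ‖g z‖ ≤ 1) →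
        ‖B 0‖ = a →
        ∀ r : ℝ, 0 ≤ r → r ≤ rs →
          Summable (fun n : ℕ => ‖B n‖ * r ^ (n + 1) / ((n : ℝ) + 1)) ∧
          ∑' n : ℕ, ‖B n‖ * r ^ (n + 1) / ((n : ℝ) + 1) ≤ 1) ∧
      (∀ r : ℝ, rs < r → r < 1 →
        ∃ (g : ℂ → ℂ) (B : ℕ → ℂ),
          (∀ z ∈ Metric.ball (0 : ℂ) 1, HasSum (fun n : ℕ => B n * z ^ n) (g z)) ∧
          (∀ z ∈ Metric.ball (0 : ℂ) 1, ‖g z‖ ≤ 1) ∧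
          ‖B 0‖ = a ∧
          Summable (fun n : ℕ => ‖B n‖ * r ^ (n + 1) / ((n : ℝ) + 1)) ∧
          1 < ∑' n : ℕ, ‖B n‖ * r ^ (n + 1) / ((n : ℝ) + 1)) := by
  have ha : 0 < a := by linarith
  obtain ⟨rs, hrs, hrs1⟩ := exists_mem_Ioo_bohrMajorant_eq_one ha0 ha1
  have hmono := strictMonoOn_bohrMajorant ha ha1
  have hrsI : rs ∈ Icc (0 : ℝ) 1 := ⟨hrs.1.le, hrs.2.le.trans ha1.le⟩
  refine ⟨rs, hrs, hrs1, fun r' hr' h => hmono.injOn ⟨hr'.1.le, hr'.2.le.trans ha1.le⟩ hrsI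
    (h.trans hrs1.symm), fun g B hg hg1 hB0 r hr0 hrrs => ?_, fun r hrsr hr1 => ?_⟩
  · obtain ⟨hsum, hle⟩ :=
      summable_and_tsum_le_bohrMajorant hg hg1 hB0 hr0 (hrrs.trans_lt hrs.2) ha1
    exact ⟨hsum, hle.trans (hrs1 ▸ hmono.monotoneOn ⟨hr0, hrrs.trans hrsI.2⟩ hrsI hrrs)⟩
  · have hr0 : 0 ≤ r := hrs.1.le.trans hrsr.le
    obtain ⟨g, B, hg, hg1, hB0, hS⟩ := exists_hasSum_majorant_eq_bohrMajorant ha ha1 hr0 hr1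
    refine ⟨g, B, hg, hg1, hB0, hS.summable, ?_⟩
    rw [hS.tsum_eq, ← hrs1]
    exact hmono hrsI ⟨hr0, hr1.le⟩ hrsr
end
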